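/- Let G₀ be a finitely generated group and let {G_ℓ}_{ℓ≥0} and {H_ℓ}_{ℓ≥0} be group chains in G₀ with H₀ = G₀. Let G_∞ = lim←{G₀/G_{ℓ+1} → G₀/G_ℓ} and H_∞ = lim←{G₀/H_{ℓ+1} → G₀/H_ℓ} with the left G₀-actions by coordinatewise multiplication. Then the chains {G_ℓ} and {H_ℓ} are conjugate equivalent — i.e. there exists a sequence (g_ℓ)_{ℓ≥0} in G₀ with g_ℓ G_ℓ = g_{ℓ+1} G_ℓ for all ℓ ≥ 0 such that the chains {g_ℓ G_ℓ g_ℓ⁻¹}_{ℓ≥0} and {H_ℓ}_{ℓ≥0} are equivalent — if and only if there exists a G₀-equivariant homeomorphism τ : G_∞ → H_∞ (not required to preserve basepoints). -/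

import Mathlib

/-!
Molino theory for matchbox manifolds (Dyer–Hurder–Lukina), Theorem 4.4(2)
(after Fokkink–Oversteegen): two group chains are conjugate equivalent if and only if
there is an equivariant homeomorphism of their inverse limits.
-/


variable {Γ : Type*} [Group Γ]

/-- Discrete topology on each coset space `Γ ⧸ H` (the coset spaces occurring below are
finite, since the subgroups have finite index). -/
instance cosetSpaceTopology (H : Subgroup Γ) : TopologicalSpace (Γ ⧸ H) := ⊥

/-- The natural map of coset spaces `Γ ⧸ H → Γ ⧸ K` for `H ≤ K`. -/
def cosetMap (H K : Subgroup Γ) (h : H ≤ K) : Γ ⧸ H → Γ ⧸ K :=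
  Quotient.map' id fun a b hab => by
    rw [QuotientGroup.leftRel_apply] at hab ⊢
    exact h hab

/-- The inverse limit `G_∞ = lim← Γ/G_ℓ` of the coset spaces of a group chain,
as the subspace of compatible sequences in `Π_ℓ Γ/G_ℓ`. -/
def InvLimSet (G : ℕ → Subgroup Γ) (hG : ∀ ℓ, G (ℓ + 1) ≤ G ℓ) :
    Set (∀ ℓ : ℕ, Γ ⧸ G ℓ) :=
  { x | ∀ ℓ, cosetMap (G (ℓ + 1)) (G ℓ) (hG ℓ) (x (ℓ + 1)) = x ℓ }

theorem cosetMap_smul (H K : Subgroup Γ) (h : H ≤ K) (g : Γ) (q : Γ ⧸ H) :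
    cosetMap H K h (g • q) = g • cosetMap H K h q := by
  induction q using Quotient.inductionOn' with
  | h a => rfl

/-- The coordinatewise left action of `Γ` on the inverse limit `lim← Γ/G_ℓ`. -/
def limSMul (G : ℕ → Subgroup Γ) (hG : ∀ ℓ, G (ℓ + 1) ≤ G ℓ) (g : Γ)
    (x : ↥(InvLimSet G hG)) : ↥(InvLimSet G hG) :=
  ⟨fun ℓ => g • x.1 ℓ, fun ℓ => by
    rw [cosetMap_smul, x.2 ℓ]⟩

/-- The basepoint `(e G_ℓ)_ℓ` of the inverse limit. -/
def basePt (G : ℕ → Subgroup Γ) (hG : ∀ ℓ, G (ℓ + 1) ≤ G ℓ) : ↥(InvLimSet G hG) :=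
  ⟨fun _ => QuotientGroup.mk 1, fun _ => rfl⟩

/-- Two group chains `{G_ℓ}` and `{H_ℓ}` are equivalent if they admit interleaved
subsequences: there are strictly increasing `(ℓ_k)`, `(j_k)` with
`G_{ℓ_0} ⊇ H_{j_0} ⊇ G_{ℓ_1} ⊇ H_{j_1} ⊇ ⋯`. -/
def ChainEquiv (G H : ℕ → Subgroup Γ) : Prop :=
  ∃ l j : ℕ → ℕ, StrictMono l ∧ StrictMono j ∧
    (∀ k, H (j k) ≤ G (l k)) ∧ (∀ k, G (l (k + 1)) ≤ H (j k))

/-- The conjugate subgroup `g K g⁻¹`. -/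
def conjSub {Γ : Type*} [Group Γ] (g : Γ) (K : Subgroup Γ) : Subgroup Γ :=
  K.map (MulAut.conj g).toMonoidHom

/-!
A point `x` of an inverse limit determines its stabilizer chain `ℓ ↦ Stab(x_ℓ)`; for the point
`(g_ℓ G_ℓ)_ℓ` it is `(g_ℓ G_ℓ g_ℓ⁻¹)_ℓ`, and for the basepoint of `H_∞` it is `(H_ℓ)_ℓ`.
Equivariant homeomorphisms taking `x` to `y` exist exactly when the stabilizer chains of `x` and
`y` are equivalent. Continuity of `τ` at `x` (the sets `{z | z_n = x_n}` form a neighbourhood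
basis) says that each `Stab(y_m)` contains some `Stab(x_n)`, and `τ⁻¹` gives the converse.
Conversely, mutual cofinality makes `a • x_n ↦ a • y_m` well defined level by level; the
resulting maps in both directions are inverse because a continuous equivariant map is
determined by its value at one point, the orbit of that point being dense.
-/

instance (H : Subgroup Γ) : DiscreteTopology (Γ ⧸ H) := ⟨rfl⟩

open MulAction

theorem stabilizer_mk_eq_conjSub (g : Γ) (K : Subgroup Γ) :
    stabilizer Γ (g : Γ ⧸ K) = conjSub g K := by
  have h := stabilizer_smul_eq_stabilizer_map_conj g ((1 : Γ) : Γ ⧸ K)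
  rwa [MulAction.Quotient.smul_mk, smul_eq_mul, mul_one, stabilizer_quotient] at h

theorem chainEquiv_iff_forall_exists_le {A B : ℕ → Subgroup Γ} (hA : Antitone A) (hB : Antitone B) :
    ChainEquiv A B ↔ (∀ m, ∃ n, B n ≤ A m) ∧ (∀ m, ∃ n, A n ≤ B m) := by
  constructor
  · rintro ⟨l, j, hl, hj, hBA, hAB⟩
    exact ⟨fun m => ⟨j m, (hBA m).trans (hA (hl.id_le m))⟩,
      fun m => ⟨l (m + 1), (hAB m).trans (hB (hj.id_le m))⟩⟩
  · rintro ⟨hBA, hAB⟩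
    choose F hF using hBA
    choose E hE using hAB
    let c : ℕ → ℕ := fun n => max (max (F n) (E n)) n + 1
    have hc : ∀ n, F n < c n ∧ E n < c n ∧ n < c n := fun n => by simp only [c]; omega
    let t : ℕ → ℕ := fun k => c^[k] 0
    have ht : ∀ k, t (k + 1) = c (t k) := fun k => Function.iterate_succ_apply' c k 0
    have ht_mono : StrictMono t := strictMono_nat_of_lt_succ fun k => ht k ▸ (hc _).2.2
    refine ⟨fun k => t (2 * k), fun k => t (2 * k + 1),
      ht_mono.comp (f := fun k => 2 * k) fun _ _ _ => by dsimp only; omega,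
      ht_mono.comp (f := fun k => 2 * k + 1) fun _ _ _ => by dsimp only; omega,
      fun k => ?_, fun k => ?_⟩
    · refine (hB ?_).trans (hF _)
      show F (t (2 * k)) ≤ t (2 * k + 1)
      exact (ht _).ge.trans' (hc _).1.le
    · refine (hA ?_).trans (hE _)
      show E (t (2 * k + 1)) ≤ t (2 * k + 1 + 1)
      exact (ht _).ge.trans' (hc _).2.1.le

theorem mk_mem_invLimSet_iff {G : ℕ → Subgroup Γ} {hG : ∀ ℓ, G (ℓ + 1) ≤ G ℓ} {g : ℕ → Γ} :
    (fun ℓ => ((g ℓ : Γ) : Γ ⧸ G ℓ)) ∈ InvLimSet G hG ↔ ∀ ℓ, (g ℓ)⁻¹ * g (ℓ + 1) ∈ G ℓ := by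
  refine forall_congr' fun ℓ => ?_
  rw [cosetMap, Quotient.map'_mk'', id, QuotientGroup.eq, ← inv_mem_iff (x := (g ℓ)⁻¹ * _)]
  simp [mul_inv_rev]

section PointedMap

variable {X Y : Type*} [MulAction Γ X] [IsPretransitive Γ X] [MulAction Γ Y]

variable (Γ) in
/-- The `Γ`-map `a • p ↦ a • q`; it is well defined when `stabilizer Γ p ≤ stabilizer Γ q`. -/
noncomputable def pointedMap (p : X) (q : Y) (z : X) : Y :=
  (exists_smul_eq Γ p z).choose • q

theorem pointedMap_smul {p : X} {q : Y} (h : stabilizer Γ p ≤ stabilizer Γ q) (a : Γ) :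
    pointedMap Γ p q (a • p) = a • q := by
  have hb := (exists_smul_eq Γ p (a • p)).choose_spec
  set b := (exists_smul_eq Γ p (a • p)).choose
  have hab : a⁻¹ * b ∈ stabilizer Γ q := h <| by
    rw [mem_stabilizer_iff, mul_smul, hb, inv_smul_smul]
  rwa [mem_stabilizer_iff, mul_smul, inv_smul_eq_iff] at hab

end PointedMap

namespace InvLimSet

variable {A B : ℕ → Subgroup Γ} {hA : ∀ ℓ, A (ℓ + 1) ≤ A ℓ} {hB : ∀ ℓ, B (ℓ + 1) ≤ B ℓ}

theorem coord_eq_of_le {z w : InvLimSet A hA} {i ℓ : ℕ} (hiℓ : i ≤ ℓ) (h : z.1 ℓ = w.1 ℓ) :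
    z.1 i = w.1 i := by
  induction hiℓ with
  | refl => exact h
  | step _ ih => exact ih (by rw [← z.2, ← w.2, h])

theorem smul_coord_eq_of_le {x z : InvLimSet A hA} {a : Γ} {i ℓ : ℕ} (hiℓ : i ≤ ℓ)
    (h : a • x.1 ℓ = z.1 ℓ) : a • x.1 i = z.1 i :=
  coord_eq_of_le (z := limSMul A hA a x) hiℓ h

def stabilizerChain (x : InvLimSet A hA) (n : ℕ) : Subgroup Γ :=
  stabilizer Γ (x.1 n)

theorem stabilizerChain_antitone (x : InvLimSet A hA) : Antitone (stabilizerChain x) :=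
  fun _ _ hij _ ha => smul_coord_eq_of_le hij ha

theorem isOpen_setOf_coord_eq (x : InvLimSet A hA) (n : ℕ) :
    IsOpen {z : InvLimSet A hA | z.1 n = x.1 n} :=
  (isOpen_discrete {x.1 n}).preimage (f := fun z : InvLimSet A hA => z.1 n)
    ((continuous_apply n).comp continuous_subtype_val)

theorem exists_setOf_coord_eq_subset {U : Set (InvLimSet A hA)} {x : InvLimSet A hA}
    (hU : IsOpen U) (hx : x ∈ U) : ∃ n, {z : InvLimSet A hA | z.1 n = x.1 n} ⊆ U := by
  obtain ⟨V, hV, rfl⟩ := isOpen_induced_iff.mp hU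
  obtain ⟨I, u, hu, hsub⟩ := isOpen_pi_iff.mp hV x.1 hx
  refine ⟨I.sup id, fun z hz => hsub fun i hi => ?_⟩
  have hzi : z.1 i = x.1 i := coord_eq_of_le (Finset.le_sup (f := id) hi) hz
  exact hzi ▸ (hu i hi).2

theorem continuous_of_coord_locally_constant {φ : InvLimSet A hA → InvLimSet B hB}
    (h : ∀ m, ∃ n, ∀ z w : InvLimSet A hA, z.1 n = w.1 n → (φ z).1 m = (φ w).1 m) :
    Continuous φ := by
  refine continuous_induced_rng.2 (continuous_pi fun m => IsLocallyConstant.continuous ?_)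
  obtain ⟨n, hn⟩ := h m
  exact (IsLocallyConstant.iff_exists_open _).2 fun x =>
    ⟨_, isOpen_setOf_coord_eq x n, rfl, fun z hz => hn z x hz⟩

theorem denseRange_limSMul (x : InvLimSet A hA) : DenseRange fun a => limSMul A hA a x := by
  refine fun z => mem_closure_iff.2 fun U hU hz => ?_
  obtain ⟨n, hn⟩ := exists_setOf_coord_eq_subset hU hz
  obtain ⟨a, ha⟩ := exists_smul_eq Γ (x.1 n) (z.1 n)
  exact ⟨limSMul A hA a x, hn ha, a, rfl⟩

theorem stabilizerChain_eq_conjSub {x : InvLimSet A hA} {g : ℕ → Γ}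
    (hg : ∀ ℓ, ((g ℓ : Γ) : Γ ⧸ A ℓ) = x.1 ℓ) :
    stabilizerChain x = fun ℓ => conjSub (g ℓ) (A ℓ) :=
  funext fun ℓ => by rw [stabilizerChain, ← hg, stabilizer_mk_eq_conjSub]

def IsEquivariant (φ : InvLimSet A hA → InvLimSet B hB) : Prop :=
  ∀ a z, φ (limSMul A hA a z) = limSMul B hB a (φ z)

theorem isEquivariant_id : IsEquivariant (id : InvLimSet A hA → InvLimSet A hA) :=
  fun _ _ => rfl

theorem IsEquivariant.comp {C : ℕ → Subgroup Γ} {hC : ∀ ℓ, C (ℓ + 1) ≤ C ℓ}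
    {ψ : InvLimSet B hB → InvLimSet C hC} {φ : InvLimSet A hA → InvLimSet B hB}
    (hψ : IsEquivariant ψ) (hφ : IsEquivariant φ) : IsEquivariant (ψ ∘ φ) :=
  fun a z => by rw [Function.comp_apply, hφ, hψ, Function.comp_apply]

theorem IsEquivariant.homeomorph_symm {τ : InvLimSet A hA ≃ₜ InvLimSet B hB}
    (hτ : IsEquivariant τ) : IsEquivariant τ.symm :=
  fun a z => τ.injective <| by rw [hτ, τ.apply_symm_apply, τ.apply_symm_apply]

theorem IsEquivariant.ext {φ ψ : InvLimSet A hA → InvLimSet B hB} (hφ : IsEquivariant φ)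
    (hψ : IsEquivariant ψ) (hφc : Continuous φ) (hψc : Continuous ψ) {x : InvLimSet A hA}
    (h : φ x = ψ x) : φ = ψ :=
  (denseRange_limSMul x).equalizer hφc hψc <| funext fun a => by
    rw [Function.comp_apply, Function.comp_apply, hφ a x, hψ a x, h]

theorem IsEquivariant.stabilizerChain_cofinal {φ : InvLimSet A hA → InvLimSet B hB}
    (hφ : IsEquivariant φ) (hφc : Continuous φ) (x : InvLimSet A hA) (m : ℕ) :
    ∃ n, stabilizerChain x n ≤ stabilizerChain (φ x) m := by
  obtain ⟨n, hn⟩ := exists_setOf_coord_eq_subset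
    ((isOpen_setOf_coord_eq (φ x) m).preimage hφc) (show (φ x).1 m = (φ x).1 m from rfl)
  refine ⟨n, fun a ha => ?_⟩
  have := hn (show (limSMul A hA a x).1 n = x.1 n from ha)
  rwa [Set.mem_preimage, hφ a x] at this

theorem pointedMap_coord_eq {Y : Type*} [MulAction Γ Y] {x z : InvLimSet A hA} {q : Y} {k n : ℕ}
    (hkn : k ≤ n) (hq : stabilizer Γ (x.1 k) ≤ stabilizer Γ q) {a : Γ}
    (ha : a • x.1 n = z.1 n) : pointedMap Γ (x.1 k) q (z.1 k) = a • q := by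
  rw [← smul_coord_eq_of_le hkn ha, pointedMap_smul hq]

section MapOfStabilizerLE

variable {N : ℕ → ℕ}

/-- The equivariant map sending `x` to `y`; level `m` of the image is read off level `N m`. -/
noncomputable def mapOfStabilizerLE (x : InvLimSet A hA) (y : InvLimSet B hB)
    (hN : ∀ m, stabilizerChain x (N m) ≤ stabilizerChain y m) (z : InvLimSet A hA) :
    InvLimSet B hB :=
  ⟨fun m => pointedMap Γ (x.1 (N m)) (y.1 m) (z.1 (N m)), fun m => by
    dsimp only
    obtain ⟨a, ha⟩ := exists_smul_eq Γ (x.1 (max (N m) (N (m + 1)))) (z.1 (max (N m) (N (m + 1))))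
    rw [pointedMap_coord_eq (le_max_right _ _) (hN _) ha,
      pointedMap_coord_eq (le_max_left _ _) (hN m) ha, cosetMap_smul, y.2]⟩

variable {x : InvLimSet A hA} {y : InvLimSet B hB}

theorem mapOfStabilizerLE_coord {hN : ∀ m, stabilizerChain x (N m) ≤ stabilizerChain y m}
    {z : InvLimSet A hA} {a : Γ} {m n : ℕ} (hn : N m ≤ n)
    (ha : a • x.1 n = z.1 n) : (mapOfStabilizerLE x y hN z).1 m = a • y.1 m :=
  pointedMap_coord_eq hn (hN m) ha

variable (hN : ∀ m, stabilizerChain x (N m) ≤ stabilizerChain y m)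

theorem mapOfStabilizerLE_self : mapOfStabilizerLE x y hN x = y :=
  Subtype.ext <| funext fun _ =>
    (mapOfStabilizerLE_coord le_rfl (one_smul _ _)).trans (one_smul _ _)

theorem isEquivariant_mapOfStabilizerLE : IsEquivariant (mapOfStabilizerLE x y hN) := by
  intro a z
  refine Subtype.ext <| funext fun m => ?_
  obtain ⟨b, hb⟩ := exists_smul_eq Γ (x.1 (N m)) (z.1 (N m))
  have hab : (a * b) • x.1 (N m) = a • z.1 (N m) := by rw [mul_smul, hb]
  rw [mapOfStabilizerLE_coord le_rfl hab, mul_smul]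
  exact congrArg (a • ·) (mapOfStabilizerLE_coord le_rfl hb).symm

theorem continuous_mapOfStabilizerLE : Continuous (mapOfStabilizerLE x y hN) :=
  continuous_of_coord_locally_constant fun m => ⟨N m, fun z w hzw => by
    obtain ⟨b, hb⟩ := exists_smul_eq Γ (x.1 (N m)) (z.1 (N m))
    rw [mapOfStabilizerLE_coord le_rfl hb, mapOfStabilizerLE_coord le_rfl (hb.trans hzw)]⟩

end MapOfStabilizerLE

theorem mapOfStabilizerLE_comp_mapOfStabilizerLE {x : InvLimSet A hA} {y : InvLimSet B hB}
    {N M : ℕ → ℕ} (hN : ∀ m, stabilizerChain x (N m) ≤ stabilizerChain y m)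
    (hM : ∀ m, stabilizerChain y (M m) ≤ stabilizerChain x m) :
    mapOfStabilizerLE y x hM ∘ mapOfStabilizerLE x y hN = id :=
  ((isEquivariant_mapOfStabilizerLE hM).comp (isEquivariant_mapOfStabilizerLE hN)).ext
    isEquivariant_id ((continuous_mapOfStabilizerLE hM).comp (continuous_mapOfStabilizerLE hN))
    continuous_id (x := x)
    (by rw [Function.comp_apply, mapOfStabilizerLE_self, mapOfStabilizerLE_self, id])

theorem exists_homeomorph_of_stabilizerChain_cofinal {x : InvLimSet A hA} {y : InvLimSet B hB}
    (hxy : ∀ m, ∃ n, stabilizerChain x n ≤ stabilizerChain y m)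
    (hyx : ∀ m, ∃ n, stabilizerChain y n ≤ stabilizerChain x m) :
    ∃ τ : InvLimSet A hA ≃ₜ InvLimSet B hB, IsEquivariant τ ∧ τ x = y := by
  choose N hN using hxy
  choose M hM using hyx
  exact ⟨⟨⟨mapOfStabilizerLE x y hN, mapOfStabilizerLE y x hM,
    congrFun (mapOfStabilizerLE_comp_mapOfStabilizerLE hN hM),
    congrFun (mapOfStabilizerLE_comp_mapOfStabilizerLE hM hN)⟩,
    continuous_mapOfStabilizerLE hN, continuous_mapOfStabilizerLE hM⟩,
    isEquivariant_mapOfStabilizerLE hN, mapOfStabilizerLE_self hN⟩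

theorem exists_homeomorph_iff_chainEquiv_stabilizerChain (x : InvLimSet A hA)
    (y : InvLimSet B hB) :
    (∃ τ : InvLimSet A hA ≃ₜ InvLimSet B hB, IsEquivariant τ ∧ τ x = y) ↔
      ChainEquiv (stabilizerChain x) (stabilizerChain y) := by
  rw [chainEquiv_iff_forall_exists_le (stabilizerChain_antitone x) (stabilizerChain_antitone y)]
  constructor
  · rintro ⟨τ, hτ, rfl⟩
    refine ⟨fun m => ?_, hτ.stabilizerChain_cofinal τ.continuous x⟩
    simpa using hτ.homeomorph_symm.stabilizerChain_cofinal τ.symm.continuous (τ x) m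
  · rintro ⟨hyx, hxy⟩
    exact exists_homeomorph_of_stabilizerChain_cofinal hxy hyx

end InvLimSet

theorem chain_conjugate_equiv_iff_equivariant_homeo_general
    {Γ : Type*} [Group Γ]
    (G H : ℕ → Subgroup Γ)
    (hGdesc : ∀ ℓ, G (ℓ + 1) ≤ G ℓ) (hHdesc : ∀ ℓ, H (ℓ + 1) ≤ H ℓ) :
    (∃ g : ℕ → Γ, (∀ ℓ, (g ℓ)⁻¹ * g (ℓ + 1) ∈ G ℓ) ∧
      ChainEquiv (fun ℓ => conjSub (g ℓ) (G ℓ)) H) ↔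
      ∃ τ : ↥(InvLimSet G hGdesc) ≃ₜ ↥(InvLimSet H hHdesc),
        ∀ (g : Γ) (x : ↥(InvLimSet G hGdesc)),
          τ (limSMul G hGdesc g x) = limSMul H hHdesc g (τ x) := by
  open InvLimSet in
  have hbase : stabilizerChain (basePt H hHdesc) = H := funext fun ℓ => stabilizer_quotient (H ℓ)
  constructor
  · rintro ⟨g, hg, hequiv⟩
    let x : InvLimSet G hGdesc := ⟨_, mk_mem_invLimSet_iff.2 hg⟩
    rw [← stabilizerChain_eq_conjSub (x := x) fun _ => rfl, ← hbase] at hequiv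
    obtain ⟨τ, hτ, -⟩ := (exists_homeomorph_iff_chainEquiv_stabilizerChain x _).2 hequiv
    exact ⟨τ, hτ⟩
  · rintro ⟨τ, hτ⟩
    set x := τ.symm (basePt H hHdesc)
    have hgx : ∀ ℓ, (((x.1 ℓ).out : Γ) : Γ ⧸ G ℓ) = x.1 ℓ := fun ℓ => Quotient.out_eq' _
    refine ⟨fun ℓ => (x.1 ℓ).out, (mk_mem_invLimSet_iff (hG := hGdesc)).1 ?_, ?_⟩
    · simpa only [hgx] using x.2
    · rw [← stabilizerChain_eq_conjSub hgx, ← hbase]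
      exact (exists_homeomorph_iff_chainEquiv_stabilizerChain x _).1 ⟨τ, hτ, τ.apply_symm_apply _⟩

/-- **Theorem 4.4(2).** Let `G₀` be a finitely generated group and `{G_ℓ}`, `{H_ℓ}` group
chains in `G₀` with `G_0 = H_0 = G₀`.  Then the chains are conjugate equivalent — there is
a sequence `(g_ℓ)` in `G₀` with `g_ℓ G_ℓ = g_{ℓ+1} G_ℓ` for all `ℓ` such that
`{g_ℓ G_ℓ g_ℓ⁻¹}` is equivalent to `{H_ℓ}` — if and only if there is a `G₀`-equivariant
homeomorphism `τ : G_∞ → H_∞` (not required to preserve basepoints). -/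
theorem chain_conjugate_equiv_iff_equivariant_homeo
    {Γ : Type*} [Group Γ] (hfg : Group.FG Γ)
    (G H : ℕ → Subgroup Γ)
    (hGdesc : ∀ ℓ, G (ℓ + 1) ≤ G ℓ) (hHdesc : ∀ ℓ, H (ℓ + 1) ≤ H ℓ)
    (hGfi : ∀ ℓ, (G ℓ).FiniteIndex) (hHfi : ∀ ℓ, (H ℓ).FiniteIndex)
    (hG0 : G 0 = ⊤) (hH0 : H 0 = ⊤) :
    (∃ g : ℕ → Γ, (∀ ℓ, (g ℓ)⁻¹ * g (ℓ + 1) ∈ G ℓ) ∧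
      ChainEquiv (fun ℓ => conjSub (g ℓ) (G ℓ)) H) ↔
      ∃ τ : ↥(InvLimSet G hGdesc) ≃ₜ ↥(InvLimSet H hHdesc),
        ∀ (g : Γ) (x : ↥(InvLimSet G hGdesc)),
          τ (limSMul G hGdesc g x) = limSMul H hHdesc g (τ x) :=
  chain_conjugate_equiv_iff_equivariant_homeo_general G H hGdesc hHdesc
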